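/- arXiv:1702.03469 — 5 statements merged into one kernel-verified Lean document; each statement's English description precedes it below -/
import Mathlib

section
/- Let H be a complex Hilbert space, T : H → H a bounded linear operator, λ ∈ ℂ, and set A := T - λ·id. Assume: (i) the range of A is closed; (ii) the kernel of A is one-dimensional, spanned by a nonzero vector p; (iii) ker(A ∘ A) = ker(A); and (iv) the kernel of the Hilbert adjoint A* is one-dimensional, spanned by a nonzero vector p*. Then the inner product ⟨p*, p⟩ is nonzero. -/
/-!
If `⟪p*, p⟫ = 0`, then `p` is orthogonal to `ker A* = (range A)ᗮ`, so `p` lies in the closure of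
`range A`, which is `range A` itself. Thus `p = A q` with `A (A q) = A p = 0`, and
`ker (A ∘ A) = ker A` gives `p = A q = 0`.
-/

open ContinuousLinearMap

theorem LinearMap.disjoint_ker_range_of_ker_comp_self_le {R M : Type*} [Semiring R]
    [AddCommMonoid M] [Module R M] {f : M →ₗ[R] M} (hf : LinearMap.ker (f ∘ₗ f) ≤ LinearMap.ker f) :
    Disjoint (LinearMap.ker f) (LinearMap.range f) := by
  refine Submodule.disjoint_def.mpr ?_
  rintro _ hx ⟨y, rfl⟩
  exact hf hx

theorem ContinuousLinearMap.orthogonal_ker_adjoint_of_isClosed_range {𝕜 E F : Type*} [RCLike 𝕜]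
    [NormedAddCommGroup E] [InnerProductSpace 𝕜 E] [CompleteSpace E]
    [NormedAddCommGroup F] [InnerProductSpace 𝕜 F] [CompleteSpace F] {T : E →L[𝕜] F}
    (hT : IsClosed (LinearMap.range (T : E →ₗ[𝕜] F) : Set F)) :
    (LinearMap.ker (adjoint T : F →ₗ[𝕜] E))ᗮ = LinearMap.range (T : E →ₗ[𝕜] F) := by
  rw [← T.orthogonal_range, Submodule.orthogonal_orthogonal_eq_closure,
    hT.submodule_topologicalClosure_eq]

theorem adjoint_eigenvector_pairing_ne_zero_general
    {H : Type*} [NormedAddCommGroup H] [InnerProductSpace ℂ H] [CompleteSpace H]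
    (A : H →L[ℂ] H)
    (hclosed : IsClosed (LinearMap.range (A : H →ₗ[ℂ] H) : Set H))
    (p : H) (hp : p ≠ 0)
    (hker : LinearMap.ker (A : H →ₗ[ℂ] H) = Submodule.span ℂ {p})
    (hker2 : LinearMap.ker ((A.comp A : H →L[ℂ] H) : H →ₗ[ℂ] H) = LinearMap.ker (A : H →ₗ[ℂ] H))
    (pstar : H)
    (hkeradj : LinearMap.ker ((ContinuousLinearMap.adjoint A : H →L[ℂ] H) : H →ₗ[ℂ] H) = Submodule.span ℂ {pstar}) :
    (inner ℂ pstar p : ℂ) ≠ 0 := by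
  intro hpair
  have hp_ker : p ∈ LinearMap.ker (A : H →ₗ[ℂ] H) := hker ▸ Submodule.mem_span_singleton_self p
  have hp_range : p ∈ LinearMap.range (A : H →ₗ[ℂ] H) := by
    rw [← orthogonal_ker_adjoint_of_isClosed_range hclosed, hkeradj,
      Submodule.mem_orthogonal_singleton_iff_inner_right]
    exact hpair
  exact hp (Submodule.disjoint_def.mp
    (LinearMap.disjoint_ker_range_of_ker_comp_self_le hker2.le) p hp_ker hp_range)

/-- For a bounded operator `T` on a complex Hilbert space and `A = T - λ·id` with
closed range, one-dimensional kernel `span {p}` equal to `ker (A ∘ A)`, and one-dimensional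
adjoint kernel `span {p*}`, the pairing `⟪p*, p⟫` is nonzero. -/
theorem adjoint_eigenvector_pairing_ne_zero
    {H : Type*} [NormedAddCommGroup H] [InnerProductSpace ℂ H] [CompleteSpace H]
    (T : H →L[ℂ] H) (lam : ℂ) (A : H →L[ℂ] H)
    (hA : A = T - lam • ContinuousLinearMap.id ℂ H)
    (hclosed : IsClosed (LinearMap.range (A : H →ₗ[ℂ] H) : Set H))
    (p : H) (hp : p ≠ 0)
    (hker : LinearMap.ker (A : H →ₗ[ℂ] H) = Submodule.span ℂ {p})
    (hker2 : LinearMap.ker ((A.comp A : H →L[ℂ] H) : H →ₗ[ℂ] H) = LinearMap.ker (A : H →ₗ[ℂ] H))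
    (pstar : H) (hpstar : pstar ≠ 0)
    (hkeradj : LinearMap.ker ((ContinuousLinearMap.adjoint A : H →L[ℂ] H) : H →ₗ[ℂ] H) = Submodule.span ℂ {pstar}) :
    (inner ℂ pstar p : ℂ) ≠ 0 :=
  adjoint_eigenvector_pairing_ne_zero_general A hclosed p hp hker hker2 pstar hkeradj
end

section
/- Let σ, p, q : ℝ → ℂ each be PT-symmetric, i.e. conj(σ(-x)) = σ(x), conj(p(-x)) = p(x), conj(q(-x)) = q(x) for all x ∈ ℝ, and suppose the function x ↦ σ(x)·p(x)·|p(x)|²·conj(q(-x)) is integrable on [-π, π]. Then the number Γ := ∫_{-π}^{π} σ(x)·p(x)·|p(x)|²·conj(q(-x)) dx is real (its imaginary part vanishes). -/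
open Real

/-- If `σ`, `p`, `q` are PT-symmetric and the integrand is integrable, then
`Γ = ∫_{-π}^{π} σ(x) p(x) |p(x)|² conj(q(-x)) dx` is real. -/
theorem effective_cubic_coefficient_real
    (σ p q : ℝ → ℂ)
    (hσ : ∀ x : ℝ, starRingEnd ℂ (σ (-x)) = σ x)
    (hp : ∀ x : ℝ, starRingEnd ℂ (p (-x)) = p x)
    (hq : ∀ x : ℝ, starRingEnd ℂ (q (-x)) = q x)
    (hint : IntervalIntegrable
      (fun x : ℝ => σ x * p x * (‖p x‖ : ℂ) ^ 2 * starRingEnd ℂ (q (-x)))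
      MeasureTheory.volume (-π) π) :
    (∫ x in (-π)..π, σ x * p x * (‖p x‖ : ℂ) ^ 2 * starRingEnd ℂ (q (-x))).im = 0 := by
  set f : ℝ → ℂ := fun x : ℝ => σ x * p x * (‖p x‖ : ℂ) ^ 2 * starRingEnd ℂ (q (-x)) with hf
  have key : ∀ x : ℝ, starRingEnd ℂ (f x) = f (-x) := by
    intro x
    have hσ' : starRingEnd ℂ (σ x) = σ (-x) := by
      rw [← hσ (-x)]; simp
    have hp' : starRingEnd ℂ (p x) = p (-x) := by
      rw [← hp (-x)]; simp
    have hnorm : ‖p x‖ = ‖p (-x)‖ := by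
      rw [← hp x, RCLike.norm_conj]
    simp only [hf, map_mul, hσ', hp', hnorm, neg_neg]
    congr 1
    · simp [Complex.conj_ofReal]
    · rw [← hq x, Complex.conj_conj]
  have h1 : (starRingEnd ℂ) (∫ x in (-π)..π, f x) = ∫ x in (-π)..π, f x := by
    have hc : (starRingEnd ℂ) (∫ x in (-π)..π, f x)
        = ∫ x in (-π)..π, starRingEnd ℂ (f x) := by
      simp only [intervalIntegral, map_sub, ← integral_conj]
    rw [hc]
    have heq : (fun x => starRingEnd ℂ (f x)) = fun x => f (-x) := funext key
    rw [heq, intervalIntegral.integral_comp_neg f]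
    simp
  have := congrArg Complex.im h1
  simp only [Complex.conj_im] at this
  linarith
end

section
/- Let β, Γ, Ω ∈ ℝ with β ≠ 0 and Γ ≠ 0, and let A : ℝ → ℝ be twice differentiable, not identically zero, satisfying -β·A''(X) + Γ·A(X)³ = Ω·A(X) for all X ∈ ℝ and A(X) → 0, A'(X) → 0 as X → +∞ and as X → -∞. Then Γ·Ω > 0; in particular Ω ≠ 0 and sign(Ω) = sign(Γ). -/
/-!
Multiplying the equation by `A'` shows that the energy `β A'²/2 + Ω A²/2 - Γ A⁴/4` is a first
integral; decay at `+∞` forces it to vanish identically. Since `A` also decays at `-∞` and is not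
identically zero, `A²` attains a positive maximum at some `X₀`, where `A' X₀ = 0`. The vanishing
energy at `X₀` then reads `Ω = Γ A(X₀)²/2`, so `ΓΩ = Γ² A(X₀)²/2 > 0`.
-/

open Filter Topology

noncomputable section

def nlsEnergy (β Γ Ω a a' : ℝ) : ℝ := β * a' ^ 2 / 2 + Ω * a ^ 2 / 2 - Γ * a ^ 4 / 4

theorem hasDerivAt_nlsEnergy_eq_zero {β Γ Ω : ℝ} {A A' A'' : ℝ → ℝ} {X : ℝ}
    (hA : HasDerivAt A (A' X) X) (hA' : HasDerivAt A' (A'' X) X)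
    (heq : -β * A'' X + Γ * A X ^ 3 = Ω * A X) :
    HasDerivAt (fun Y => nlsEnergy β Γ Ω (A Y) (A' Y)) 0 X := by
  have h := ((((hA'.fun_pow 2).const_mul β).div_const 2).fun_add
    (((hA.fun_pow 2).const_mul Ω).div_const 2)).fun_sub (((hA.fun_pow 4).const_mul Γ).div_const 4)
  refine h.congr_deriv ?_
  push_cast
  linear_combination (-A' X) * heq

theorem nlsEnergy_eq_zero {β Γ Ω : ℝ} {A A' A'' : ℝ → ℝ}
    (hA : ∀ X, HasDerivAt A (A' X) X) (hA' : ∀ X, HasDerivAt A' (A'' X) X)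
    (heq : ∀ X, -β * A'' X + Γ * A X ^ 3 = Ω * A X)
    (hlimA : Tendsto A atTop (𝓝 0)) (hlimA' : Tendsto A' atTop (𝓝 0)) (X : ℝ) :
    nlsEnergy β Γ Ω (A X) (A' X) = 0 := by
  let E := fun Y => nlsEnergy β Γ Ω (A Y) (A' Y)
  have hE : ∀ Y, HasDerivAt E 0 Y := fun Y => hasDerivAt_nlsEnergy_eq_zero (hA Y) (hA' Y) (heq Y)
  have hconst : ∀ Y, E Y = E X := fun Y =>
    is_const_of_deriv_eq_zero (fun Y => (hE Y).differentiableAt) (fun Y => (hE Y).deriv) Y X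
  have hlim : Tendsto E atTop (𝓝 (nlsEnergy β Γ Ω 0 0)) :=
    ((((hlimA'.pow 2).const_mul β).div_const 2).add
      (((hlimA.pow 2).const_mul Ω).div_const 2)).sub (((hlimA.pow 4).const_mul Γ).div_const 4)
  have hlimX : Tendsto E atTop (𝓝 (E X)) := tendsto_const_nhds.congr fun Y => (hconst Y).symm
  exact (tendsto_nhds_unique hlimX hlim).trans (by simp [nlsEnergy])

theorem exists_isMaxOn_of_tendsto_atBot_atTop {f : ℝ → ℝ} (hf : Continuous f)
    (hbot : Tendsto f atBot (𝓝 0)) (htop : Tendsto f atTop (𝓝 0)) {x₁ : ℝ} (hx₁ : 0 < f x₁) :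
    ∃ x₀, IsMaxOn f Set.univ x₀ := by
  have hlim : Tendsto f (cocompact ℝ) (𝓝 0) := by
    rw [cocompact_eq_atBot_atTop]
    exact hbot.sup htop
  obtain ⟨x₀, hx₀⟩ := hf.exists_forall_ge' x₁ (hlim.eventually (eventually_le_nhds hx₁))
  exact ⟨x₀, fun y _ => hx₀ y⟩

theorem exists_ne_zero_and_deriv_eq_zero {A A' : ℝ → ℝ} (hA : ∀ X, HasDerivAt A (A' X) X)
    (hne : ∃ X, A X ≠ 0) (hbot : Tendsto A atBot (𝓝 0)) (htop : Tendsto A atTop (𝓝 0)) :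
    ∃ X₀, A X₀ ≠ 0 ∧ A' X₀ = 0 := by
  obtain ⟨X₁, hX₁⟩ := hne
  have hcont : Continuous fun X => A X ^ 2 :=
    (continuous_iff_continuousAt.2 fun X => (hA X).continuousAt).pow 2
  obtain ⟨X₀, hmax⟩ := exists_isMaxOn_of_tendsto_atBot_atTop hcont
    (by simpa using hbot.pow 2) (by simpa using htop.pow 2) (by positivity : 0 < A X₁ ^ 2)
  have hA₀ : A X₀ ≠ 0 := by
    have : 0 < A X₀ ^ 2 := (by positivity : 0 < A X₁ ^ 2).trans_le (hmax (Set.mem_univ X₁))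
    exact fun h => by simp [h] at this
  have hcrit : 2 * A X₀ * A' X₀ = 0 :=
    (hmax.isLocalMax Filter.univ_mem).hasDerivAt_eq_zero (by simpa using (hA X₀).fun_pow 2)
  exact ⟨X₀, hA₀, by simpa [hA₀] using hcrit⟩

end

theorem nls_bound_state_necessary_condition_general
    (β Γ Ω : ℝ) (hΓ : Γ ≠ 0)
    (A A' A'' : ℝ → ℝ)
    (hA : ∀ X, HasDerivAt A (A' X) X)
    (hA' : ∀ X, HasDerivAt A' (A'' X) X)
    (heq : ∀ X : ℝ, -β * A'' X + Γ * (A X) ^ 3 = Ω * A X)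
    (hne : ∃ X : ℝ, A X ≠ 0)
    (hlimA : Tendsto A atTop (nhds 0))
    (hlimA' : Tendsto A' atTop (nhds 0))
    (hlimA2 : Tendsto A atBot (nhds 0)) :
    Γ * Ω > 0 := by
  obtain ⟨X₀, hA₀, hA'₀⟩ := exists_ne_zero_and_deriv_eq_zero hA hne hlimA2 hlimA
  have hE := nlsEnergy_eq_zero hA hA' heq hlimA hlimA' X₀
  rw [nlsEnergy, hA'₀] at hE
  have hΩ : Ω = Γ * A X₀ ^ 2 / 2 := by
    apply mul_right_cancel₀ (pow_ne_zero 2 hA₀)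
    linear_combination 2 * hE
  rw [hΩ]
  have : 0 < Γ ^ 2 * A X₀ ^ 2 / 2 := by positivity
  linear_combination this

/-- A nontrivial real bound state of the stationary NLS equation
`-βA'' + ΓA³ = ΩA` (decaying with its derivative at `±∞`) exists only if `ΓΩ > 0`. -/
theorem nls_bound_state_necessary_condition
    (β Γ Ω : ℝ) (hβ : β ≠ 0) (hΓ : Γ ≠ 0)
    (A A' A'' : ℝ → ℝ)
    (hA : ∀ X, HasDerivAt A (A' X) X)
    (hA' : ∀ X, HasDerivAt A' (A'' X) X)
    (heq : ∀ X : ℝ, -β * A'' X + Γ * (A X) ^ 3 = Ω * A X)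
    (hne : ∃ X : ℝ, A X ≠ 0)
    (hlimA : Tendsto A atTop (nhds 0))
    (hlimA' : Tendsto A' atTop (nhds 0))
    (hlimA2 : Tendsto A atBot (nhds 0))
    (hlimA2' : Tendsto A' atBot (nhds 0)) :
    Γ * Ω > 0 :=
  nls_bound_state_necessary_condition_general β Γ Ω hΓ A A' A'' hA hA' heq hne hlimA hlimA' hlimA2
end

section
/- Let (b_j)_{j≥1} be a summable sequence of real numbers and define W : ℝ → ℝ by W(x) = Σ_{j≥1} b_j·sin(j·x). For an integer m ≥ 1 define φ₊(x) = (exp(i·(m-1)·x) + exp(-i·m·x))/(2√π) and φ₋(x) = (exp(i·(m-1)·x) - exp(-i·m·x))/(2·i·√π). Then ∫_0^{2π} W(x)·φ₊(x)·conj(φ₋(x)) dx = b_{2m-1}/2. -/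
open Real MeasureTheory

/-!
Because `e^{i(m-1)x}` and `e^{-imx}` are unimodular, `φ₊ · conj φ₋ = sin((2m-1)x) / (2π)`, so the
pairing is `(2π)⁻¹ ∫₀^{2π} W(x) sin((2m-1)x) dx`. Summability of `(b_j)`
dominates the sine series by `Σ |b_j|`, so it can be integrated termwise, and orthogonality of the
sines leaves `b_{2m-1} π`.
-/

lemma integral_cos_int_mul_eq_zero {k : ℤ} (hk : k ≠ 0) :
    ∫ x in (0 : ℝ)..2 * π, cos (k * x) = 0 := by
  have hk' : (k : ℝ) ≠ 0 := Int.cast_ne_zero.mpr hk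
  rw [intervalIntegral.integral_comp_mul_left cos hk', integral_cos, mul_zero, sin_zero, sub_zero,
    show (k : ℝ) * (2 * π) = ((2 * k : ℤ) : ℝ) * π by push_cast; ring, sin_int_mul_pi, smul_zero]

lemma integral_sin_nat_mul_mul_sin_nat_mul (j : ℕ) {N : ℕ} (hN : N ≠ 0) :
    ∫ x in (0 : ℝ)..2 * π, sin (j * x) * sin (N * x) = if j = N then π else 0 := by
  have product_to_sum (x : ℝ) : sin (j * x) * sin (N * x) =
      (cos (((j - N : ℤ) : ℝ) * x) - cos (((j + N : ℤ) : ℝ) * x)) / 2 := by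
    push_cast
    rw [sub_mul, add_mul, cos_sub, cos_add]
    ring
  simp_rw [product_to_sum]
  rw [intervalIntegral.integral_div,
    intervalIntegral.integral_sub (Continuous.intervalIntegrable (by fun_prop) _ _)
      (Continuous.intervalIntegrable (by fun_prop) _ _),
    integral_cos_int_mul_eq_zero (by omega : (j + N : ℤ) ≠ 0)]
  split_ifs with h
  · simp [h]
  · rw [integral_cos_int_mul_eq_zero (by omega : (j - N : ℤ) ≠ 0)]
    simp

lemma summable_mul_sin_of_summable {b : ℕ → ℝ} (hb : Summable b) (x : ℝ) :
    Summable fun j : ℕ => b j * sin (j * x) :=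
  hb.norm.of_norm_bounded fun j => by
    simpa [abs_mul] using mul_le_of_le_one_right (abs_nonneg (b j)) (abs_sin_le_one (j * x))

lemma integral_sine_series_mul_sin {b : ℕ → ℝ} (hb : Summable b) {N : ℕ} (hN : N ≠ 0) :
    ∫ x in (0 : ℝ)..2 * π, (∑' j : ℕ, b j * sin (j * x)) * sin (N * x) = b N * π := by
  have termwise : HasSum (fun j : ℕ => ∫ x in (0 : ℝ)..2 * π, b j * sin (j * x) * sin (N * x))
      (∫ x in (0 : ℝ)..2 * π, (∑' j : ℕ, b j * sin (j * x)) * sin (N * x)) := by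
    refine intervalIntegral.hasSum_integral_of_dominated_convergence (fun j _ => |b j|)
      (fun j => by fun_prop) (fun j => ae_of_all _ fun x _ => ?_)
      (ae_of_all _ fun _ _ => hb.abs) intervalIntegrable_const
      (ae_of_all _ fun x _ => (summable_mul_sin_of_summable hb x).hasSum.mul_right _)
    simp only [norm_mul, Real.norm_eq_abs, mul_assoc]
    exact mul_le_of_le_one_right (abs_nonneg _) (mul_le_one₀ (abs_sin_le_one _) (abs_nonneg _)
      (abs_sin_le_one _))
  refine termwise.unique ?_
  simp_rw [mul_assoc, intervalIntegral.integral_const_mul,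
    integral_sin_nat_mul_mul_sin_nat_mul _ hN, mul_ite, mul_zero]
  convert hasSum_ite_eq N (b N * π) using 2 with j
  split_ifs with h <;> simp [h]

lemma Complex.add_mul_conj_sub (u v : ℂ) :
    (u + v) * (starRingEnd ℂ) (u - v) =
      (normSq u - normSq v : ℝ) - 2 * I * (u * (starRingEnd ℂ) v).im := by
  apply Complex.ext <;> simp [normSq_apply] <;> ring

lemma dirac_eigenfunctions_mul_conj (m x : ℝ) :
    (Complex.exp (Complex.I * ((m : ℂ) - 1) * (x : ℂ))
        + Complex.exp (-(Complex.I * (m : ℂ) * (x : ℂ)))) / (2 * (Real.sqrt π : ℂ))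
    * starRingEnd ℂ ((Complex.exp (Complex.I * ((m : ℂ) - 1) * (x : ℂ))
        - Complex.exp (-(Complex.I * (m : ℂ) * (x : ℂ))))
        / (2 * Complex.I * (Real.sqrt π : ℂ)))
    = ((sin ((2 * m - 1) * x) / (2 * π) : ℝ) : ℂ) := by
  have hu : Complex.exp (Complex.I * ((m : ℂ) - 1) * x) =
      Complex.exp (((m - 1) * x : ℝ) * Complex.I) := by
    push_cast; ring_nf
  have hv : Complex.exp (-(Complex.I * m * x)) = Complex.exp ((-(m * x) : ℝ) * Complex.I) := by
    push_cast; ring_nf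
  have hphase : Complex.exp (((m - 1) * x : ℝ) * Complex.I) *
      starRingEnd ℂ (Complex.exp ((-(m * x) : ℝ) * Complex.I)) =
      Complex.exp (((2 * m - 1) * x : ℝ) * Complex.I) := by
    rw [← Complex.exp_conj, ← Complex.exp_add]
    congr 1
    simp only [map_mul, Complex.conj_ofReal, Complex.conj_I]
    push_cast; ring
  have hsqrt : (Real.sqrt π : ℂ) * Real.sqrt π = π := by
    rw [← Complex.ofReal_mul, mul_self_sqrt pi_pos.le]
  rw [hu, hv, map_div₀, div_mul_div_comm, Complex.add_mul_conj_sub, hphase,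
    Complex.exp_ofReal_mul_I_im, Complex.normSq_eq_norm_sq, Complex.normSq_eq_norm_sq,
    Complex.norm_exp_ofReal_mul_I, Complex.norm_exp_ofReal_mul_I]
  have hsqrt_ne : (Real.sqrt π : ℂ) ≠ 0 := by simp [pi_pos.le, pi_pos.ne']
  simp only [map_mul, Complex.conj_ofReal, Complex.conj_I, map_ofNat]
  push_cast
  rw [← hsqrt]
  field_simp
  ring

/-- For `W(x) = Σ_{j≥1} b_j sin(jx)` with summable real coefficients, `m ≥ 1`,
and the normalized eigenfunctions `φ₊(x) = (e^{i(m-1)x} + e^{-imx})/(2√π)`,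
`φ₋(x) = (e^{i(m-1)x} - e^{-imx})/(2i√π)` at the Dirac point `(1/2, (2m-1)²/4)`,
one has `∫_0^{2π} W φ₊ conj(φ₋) dx = b_{2m-1}/2`. -/
theorem fourier_sine_pairing_odd_dirac
    (b : ℕ → ℝ) (hb : Summable b)
    (W : ℝ → ℝ) (hW : ∀ x : ℝ, W x = ∑' j : ℕ, b j * Real.sin (j * x))
    (m : ℕ) (hm : 1 ≤ m)
    (φp φm : ℝ → ℂ)
    (hφp : ∀ x : ℝ, φp x =
      (Complex.exp (Complex.I * ((m : ℂ) - 1) * (x : ℂ))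
        + Complex.exp (-(Complex.I * (m : ℂ) * (x : ℂ)))) / (2 * (Real.sqrt π : ℂ)))
    (hφm : ∀ x : ℝ, φm x =
      (Complex.exp (Complex.I * ((m : ℂ) - 1) * (x : ℂ))
        - Complex.exp (-(Complex.I * (m : ℂ) * (x : ℂ))))
        / (2 * Complex.I * (Real.sqrt π : ℂ))) :
    (∫ x in (0:ℝ)..(2 * π), (W x : ℂ) * φp x * starRingEnd ℂ (φm x))
      = (b (2 * m - 1) / 2 : ℝ) := by
  have hN : ((2 * m - 1 : ℕ) : ℝ) = 2 * m - 1 := by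
    rw [Nat.cast_sub (by omega), Nat.cast_mul, Nat.cast_ofNat, Nat.cast_one]
  have integrand (x : ℝ) : (W x : ℂ) * φp x * starRingEnd ℂ (φm x) =
      ((W x * sin ((2 * m - 1 : ℕ) * x) / (2 * π) : ℝ) : ℂ) := by
    have h := dirac_eigenfunctions_mul_conj m x
    rw [Complex.ofReal_natCast] at h
    rw [mul_assoc, hφp, hφm, h, hN, ← Complex.ofReal_mul, mul_div_assoc]
  simp_rw [integrand, hW]
  rw [intervalIntegral.integral_ofReal, intervalIntegral.integral_div,
    integral_sine_series_mul_sin hb (by omega)]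
  field_simp
end

section
/- Let u : ℝ → ℂ be a Schwartz function and define its Fourier transform by û(ξ) := (1/(2π))·∫_ℝ u(y)·exp(-i·ξ·y) dy. Then for all x, k ∈ ℝ, Σ_{n∈ℤ} u(x + 2πn)·exp(-i·k·(x + 2πn)) = Σ_{j∈ℤ} û(k + j)·exp(i·j·x), both series converging absolutely. -/
/-!
Substituting `y = 2πv` turns the `2π`-periodization into the `1`-periodization of
`g(v) = u(2πv)`, whose Fourier transform in Mathlib's normalization `∫ e^{-2πivξ} g(v) dv` is
exactly `û`. The left-hand side is then the periodization of the modulated function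
`e^{-2πikv} g(v)`, whose Fourier transform is the translate `ξ ↦ û(k + ξ)`, and the identity is
Poisson summation for it: both the function and its Fourier transform decay like Schwartz
functions.
-/

open Real MeasureTheory FourierTransform Filter Asymptotics
open scoped SchwartzMap

theorem Real.fourier_fourierChar_smul {E : Type*} [NormedAddCommGroup E] [NormedSpace ℂ E]
    (f : ℝ → E) (c ξ : ℝ) : 𝓕 (fun v => 𝐞 (-(c * v)) • f v) ξ = 𝓕 f (c + ξ) := by
  simp only [Real.fourier_real_eq, smul_smul, ← AddChar.map_add_eq_mul]
  congr 1 with v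
  congr 2
  ring

theorem Real.fourier_comp_two_pi_mul (u : ℝ → ℂ) (ξ : ℝ) :
    𝓕 (fun v => u (2 * π * v)) ξ
      = (1 / (2 * π) : ℂ) * ∫ y : ℝ, u y * Complex.exp (-(Complex.I * ξ * y)) := by
  rw [Real.fourier_real_eq_integral_exp_smul]
  have := Measure.integral_comp_mul_left
    (fun y : ℝ => u y * Complex.exp (-(Complex.I * ξ * y))) (2 * π)
  rw [abs_of_pos (by positivity), Complex.real_smul] at this
  convert this using 1
  · congr 1 with v
    rw [smul_eq_mul, mul_comm]
    push_cast
    ring_nf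
  · push_cast; ring

namespace SchwartzMap

variable {E : Type*} [NormedAddCommGroup E] [NormedSpace ℝ E]

theorem summable_norm_int_add (f : 𝓢(ℝ, E)) (a : ℝ) : Summable fun n : ℤ => ‖f (a + n)‖ := by
  have hf := ((f.compSubConstCLM ℝ (-a)).isBigO_cocompact_rpow (-2)).comp_tendsto
    Int.tendsto_coe_cofinite
  refine (summable_of_isBigO (Real.summable_abs_int_rpow one_lt_two) hf.norm_left).congr
    fun n => ?_
  simp [compSubConstCLM_apply, add_comm]

theorem tsum_fourierChar_smul_eq (f : 𝓢(ℝ, ℂ)) (c x : ℝ) :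
    ∑' n : ℤ, 𝐞 (-(c * (x + n))) • f (x + n)
      = ∑' m : ℤ, 𝓕 f (c + m) * fourier m (x : UnitAddCircle) := by
  have hdecay : (fun v => 𝐞 (-(c * v)) • f v) =O[cocompact ℝ] fun x : ℝ => |x| ^ (-2 : ℝ) :=
    (isBigO_of_le _ fun v => by simp).trans (f.isBigO_cocompact_rpow (-2))
  have hshift : 𝓕 (fun v => 𝐞 (-(c * v)) • f v) = (𝓕 f).compSubConstCLM ℝ (-c) := by
    ext ξ
    rw [Real.fourier_fourierChar_smul, compSubConstCLM_apply, sub_neg_eq_add, add_comm,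
      fourier_coe]
  have := Real.tsum_eq_tsum_fourier_of_rpow_decay (by fun_prop) one_lt_two hdecay
    (hshift ▸ ((𝓕 f).compSubConstCLM ℝ (-c)).isBigO_cocompact_rpow (-2)) x
  simpa only [Real.fourier_fourierChar_smul, fourier_coe] using this

end SchwartzMap

/-- For a Schwartz function `u` with Fourier transform
`û(ξ) = (1/2π)∫ u(y)e^{-iξy} dy`, the Bloch-transform identity
`Σ_{n∈ℤ} u(x+2πn) e^{-ik(x+2πn)} = Σ_{j∈ℤ} û(k+j) e^{ijx}` holds for all `x, k ∈ ℝ`,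
both series converging absolutely. -/
theorem bloch_transform_poisson_identity
    (u : SchwartzMap ℝ ℂ) (uhat : ℝ → ℂ)
    (huhat : ∀ ξ : ℝ, uhat ξ
      = (1 / (2 * π) : ℂ) * ∫ y : ℝ, u y * Complex.exp (-(Complex.I * (ξ : ℂ) * (y : ℂ))))
    (x k : ℝ) :
    Summable (fun n : ℤ =>
      ‖u (x + 2 * π * n) * Complex.exp (-(Complex.I * (k : ℂ) * ((x + 2 * π * n : ℝ) : ℂ)))‖) ∧
    Summable (fun j : ℤ =>
      ‖uhat (k + j) * Complex.exp (Complex.I * (j : ℂ) * (x : ℂ))‖) ∧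
    (∑' n : ℤ, u (x + 2 * π * n)
        * Complex.exp (-(Complex.I * (k : ℂ) * ((x + 2 * π * n : ℝ) : ℂ))))
      = ∑' j : ℤ, uhat (k + j) * Complex.exp (Complex.I * (j : ℂ) * (x : ℂ)) := by
  let g : 𝓢(ℝ, ℂ) := u.compCLMOfContinuousLinearEquiv ℝ
    (LinearEquiv.smulOfNeZero ℝ ℝ (2 * π) two_pi_pos.ne').toContinuousLinearEquiv
  have hFg (ξ : ℝ) : 𝓕 g ξ = uhat ξ := by
    rw [huhat, ← Real.fourier_comp_two_pi_mul, SchwartzMap.fourier_coe]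
    rfl
  have hterm (n : ℤ) :
      u (x + 2 * π * n) * Complex.exp (-(Complex.I * k * ((x + 2 * π * n : ℝ) : ℂ)))
      = 𝐞 (-(k * (x / (2 * π) + n))) • g (x / (2 * π) + n) := by
    have hx : x + 2 * π * n = 2 * π * (x / (2 * π) + n) := by field_simp
    rw [Circle.smul_def, Real.fourierChar_apply, smul_eq_mul, mul_comm, hx]
    congr 2
    push_cast
    field_simp
  have hcoef (j : ℤ) : uhat (k + j) * Complex.exp (Complex.I * j * x)
      = 𝓕 g (k + j) * fourier j ((x / (2 * π) : ℝ) : UnitAddCircle) := by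
    rw [hFg, fourier_coe_apply]
    congr 2
    push_cast
    field_simp
  refine ⟨?_, ?_, ?_⟩
  · simpa only [hterm, Circle.norm_smul] using g.summable_norm_int_add (x / (2 * π))
  · have hunit (j : ℤ) : ‖Complex.exp (Complex.I * j * x)‖ = 1 := by
      simp [Complex.norm_exp]
    exact ((𝓕 g).summable_norm_int_add k).congr fun j => by rw [norm_mul, hunit, mul_one, hFg]
  · simpa only [hterm, hcoef] using g.tsum_fourierChar_smul_eq k (x / (2 * π))
end
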